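/- arXiv:1603.05888 — 8 statements merged into one kernel-verified Lean document; each statement's English description precedes it below -/
import Mathlib

section
/- For any graph H and any edge e of H, the number of independent sets satisfies i(H)/i(H-e) ≥ 3/4, where H-e denotes H with edge e removed. -/
open SimpleGraph

/-- Number of independent sets of a graph (including the empty set). -/
noncomputable def indepCount {V : Type*} (H : SimpleGraph V) : ℕ :=
  Nat.card {s : Finset V // ∀ u ∈ s, ∀ v ∈ s, ¬ H.Adj u v}

theorem stmt_0 {V : Type*} [Fintype V] (H : SimpleGraph V) (u v : V) (he : H.Adj u v) :
    (indepCount H : ℝ) / (indepCount (H.deleteEdges {s(u, v)}) : ℝ) ≥ 3 / 4 := by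
  classical
  have hne : u ≠ v := he.ne
  set H' := H.deleteEdges {s(u,v)} with hH'
  have key : ∀ s : Finset V, (∀ x ∈ s, ∀ y ∈ s, ¬ H'.Adj x y) →
      ∀ t : Finset V, t ⊆ s → (u ∉ t ∨ v ∉ t) → ∀ x ∈ t, ∀ y ∈ t, ¬ H.Adj x y := by
    intro s hs t hts hm x hx y hy hadj
    have h1 := hs x (hts hx) y (hts hy)
    rw [hH', SimpleGraph.deleteEdges_adj] at h1
    push_neg at h1
    have h2 := h1 hadj
    simp only [Set.mem_singleton_iff, Sym2.eq_iff] at h2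
    rcases h2 with ⟨hx1, hy1⟩ | ⟨hx1, hy1⟩ <;> subst hx1 <;> subst hy1 <;>
      rcases hm with hm | hm <;> exact hm ‹_›
  haveI : Finite V := Finite.of_fintype V
  have hcA : indepCount H = Nat.card {s : Finset V // ∀ x ∈ s, ∀ y ∈ s, ¬ H.Adj x y} := rfl
  have hcC : indepCount H' = Nat.card {s : Finset V // ∀ x ∈ s, ∀ y ∈ s, ¬ H'.Adj x y} := rfl
  set A := {s : Finset V // ∀ x ∈ s, ∀ y ∈ s, ¬ H.Adj x y}
  set B := {s : Finset V // (∀ x ∈ s, ∀ y ∈ s, ¬ H'.Adj x y) ∧ u ∈ s ∧ v ∈ s}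
  set C := {s : Finset V // ∀ x ∈ s, ∀ y ∈ s, ¬ H'.Adj x y}
  have h2 : 3 * Nat.card B ≤ Nat.card A := by
    have hmain : Nat.card (B × Fin 3) ≤ Nat.card A := by
      let f : B × Fin 3 → A := fun p =>
        match p.2 with
        | 0 => ⟨p.1.1.erase u, key _ p.1.2.1 _ (Finset.erase_subset _ _)
            (Or.inl (Finset.notMem_erase _ _))⟩
        | 1 => ⟨p.1.1.erase v, key _ p.1.2.1 _ (Finset.erase_subset _ _)
            (Or.inr (Finset.notMem_erase _ _))⟩
        | 2 => ⟨(p.1.1.erase u).erase v, key _ p.1.2.1 _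
            ((Finset.erase_subset _ _).trans (Finset.erase_subset _ _))
            (Or.inr (Finset.notMem_erase _ _))⟩
      apply Nat.card_le_card_of_injective f
      rintro ⟨⟨s, hs, hus, hvs⟩, i⟩ ⟨⟨t, ht, hut, hvt⟩, j⟩ hij
      fin_cases i <;> fin_cases j <;>
        simp only [f] at hij <;>
        have hst := congrArg Subtype.val hij <;>
        simp only at hst
      · obtain rfl : s = t := by
          have := congrArg (insert u) hst
          rwa [Finset.insert_erase hus, Finset.insert_erase hut] at this
        rfl
      · exfalso
        have h1 : v ∈ s.erase u := Finset.mem_erase.2 ⟨Ne.symm hne, hvs⟩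
        rw [hst] at h1
        exact Finset.notMem_erase _ _ h1
      · exfalso
        have h1 : v ∈ s.erase u := Finset.mem_erase.2 ⟨Ne.symm hne, hvs⟩
        rw [hst] at h1
        exact Finset.notMem_erase _ _ h1
      · exfalso
        have h1 : u ∈ s.erase v := Finset.mem_erase.2 ⟨hne, hus⟩
        rw [hst] at h1
        exact Finset.notMem_erase _ _ h1
      · obtain rfl : s = t := by
          have := congrArg (insert v) hst
          rwa [Finset.insert_erase hvs, Finset.insert_erase hvt] at this
        rfl
      · exfalso
        have h1 : u ∈ s.erase v := Finset.mem_erase.2 ⟨hne, hus⟩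
        rw [hst] at h1
        exact (Finset.mem_erase.1 (Finset.mem_of_mem_erase h1)).1 rfl
      · exfalso
        have h1 : v ∈ t.erase u := Finset.mem_erase.2 ⟨Ne.symm hne, hvt⟩
        rw [← hst] at h1
        exact Finset.notMem_erase _ _ h1
      · exfalso
        have h1 : u ∈ t.erase v := Finset.mem_erase.2 ⟨hne, hut⟩
        rw [← hst] at h1
        exact (Finset.mem_erase.1 (Finset.mem_of_mem_erase h1)).1 rfl
      · obtain rfl : s = t := by
          have h4 := congrArg (fun w => insert u (insert v w)) hst
          simp only [Finset.insert_erase (Finset.mem_erase.2 ⟨Ne.symm hne, hvs⟩),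
            Finset.insert_erase hus, Finset.insert_erase (Finset.mem_erase.2 ⟨Ne.symm hne, hvt⟩),
            Finset.insert_erase hut] at h4
          exact h4
        rfl
    calc 3 * Nat.card B = Nat.card B * Nat.card (Fin 3) := by
          simp [Nat.card_eq_fintype_card, mul_comm]
      _ = Nat.card (B × Fin 3) := (Nat.card_prod _ _).symm
      _ ≤ Nat.card A := hmain
  have h1 : Nat.card C ≤ Nat.card A + Nat.card B := by
    have hCmem : ∀ s : C, (¬ ∀ x ∈ s.1, ∀ y ∈ s.1, ¬ H.Adj x y) → u ∈ s.1 ∧ v ∈ s.1 := by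
      rintro ⟨s, hs⟩ hns
      push_neg at hns
      obtain ⟨x, hx, y, hy, hadj⟩ := hns
      have h1 := hs x hx y hy
      rw [hH', SimpleGraph.deleteEdges_adj] at h1
      push_neg at h1
      have h2 := h1 hadj
      simp only [Set.mem_singleton_iff, Sym2.eq_iff] at h2
      rcases h2 with ⟨hx1, hy1⟩ | ⟨hx1, hy1⟩ <;> subst hx1 <;> subst hy1
      · exact ⟨hx, hy⟩
      · exact ⟨hy, hx⟩
    let g : C → A ⊕ B := fun s =>
      if h : ∀ x ∈ s.1, ∀ y ∈ s.1, ¬ H.Adj x y then Sum.inl ⟨s.1, h⟩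
      else Sum.inr ⟨s.1, s.2, hCmem s h⟩
    have hg : Function.Injective g := by
      intro s t hst
      simp only [g] at hst
      split_ifs at hst <;>
        first
        | exact Subtype.ext (by
            simpa using congrArg (Sum.elim Subtype.val Subtype.val) hst)
        | simp at hst
    calc Nat.card C ≤ Nat.card (A ⊕ B) := Nat.card_le_card_of_injective g hg
      _ = Nat.card A + Nat.card B := Nat.card_sum
  have h3 : 0 < Nat.card C := by
    have : Nonempty C := ⟨⟨∅, by simp⟩⟩
    exact Nat.card_pos
  rw [hcA, hcC, ge_iff_le, div_le_div_iff₀ (by norm_num) (by exact_mod_cast h3)]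
  have H1 : (Nat.card C : ℝ) ≤ (Nat.card A : ℝ) + (Nat.card B : ℝ) := by exact_mod_cast h1
  have H2 : 3 * (Nat.card B : ℝ) ≤ (Nat.card A : ℝ) := by exact_mod_cast h2
  push_cast
  linarith
end

section
/- For any graph H on n vertices with e(H) edges, the number of independent sets satisfies i(H) ≥ 2^n · (3/4)^{e(H)}. -/
/-!
The family of vertex sets containing no edge is the intersection, over the edges `e`, of the
families of sets not containing `e`. Each of these is a down-set of `Finset V`, and for an edge
with two ends it has exactly `3/4` of all `2 ^ n` sets. By the Harris–Kleitman inequality down-sets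
are positively correlated, so the density of the intersection is at least the product of the
densities, `(3/4) ^ e(H)`.
-/

open SimpleGraph

open Finset

section EdgeFreeSets

variable {α ι : Type*} [DecidableEq α] [Fintype α]

/-- The independent sets of the multi-hypergraph on `α` with edges `T i`, `i ∈ I`. -/
def edgeFreeSets (T : ι → Finset α) (I : Finset ι) : Finset (Finset α) :=
  {s | ∀ i ∈ I, ¬ T i ⊆ s}

variable (T : ι → Finset α)

theorem isLowerSet_edgeFreeSets (I : Finset ι) : IsLowerSet (edgeFreeSets T I : Set (Finset α)) :=
  fun _ _ hst hs => by
    simp only [edgeFreeSets, coe_filter, mem_univ, true_and, Set.mem_ofPred_eq] at hs ⊢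
    exact fun i hi hit => hs i hi (hit.trans hst)

@[simp]
theorem edgeFreeSets_empty : edgeFreeSets T (∅ : Finset ι) = univ := by
  ext; simp [edgeFreeSets]

theorem edgeFreeSets_insert [DecidableEq ι] (i : ι) (I : Finset ι) :
    edgeFreeSets T (insert i I) = edgeFreeSets T I ∩ edgeFreeSets T {i} := by
  ext s; simp [edgeFreeSets, and_comm]

theorem card_edgeFreeSets_singleton_add (i : ι) :
    #(edgeFreeSets T {i}) + 2 ^ (Fintype.card α - #(T i)) = 2 ^ Fintype.card α := by
  have hcompl : (edgeFreeSets T {i})ᶜ = Icc (T i) univ := by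
    ext s; simp [edgeFreeSets]
  rw [← card_univ, ← card_Icc_finset (subset_univ (T i)), ← hcompl, card_add_card_compl,
    Fintype.card_finset, card_univ]

theorem card_edgeFreeSets_singleton (i : ι) :
    (#(edgeFreeSets T {i}) : ℝ) = 2 ^ Fintype.card α * (1 - (1 / 2) ^ #(T i)) := by
  have hsum := card_edgeFreeSets_singleton_add T i
  have hle : #(T i) ≤ Fintype.card α := card_le_univ _
  have hpow : (2 : ℝ) ^ (Fintype.card α - #(T i)) = 2 ^ Fintype.card α * (1 / 2) ^ #(T i) := by
    rw [← Nat.sub_add_cancel hle, Nat.add_sub_cancel, pow_add, one_div_pow,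
      mul_assoc, mul_one_div_cancel (by positivity), mul_one]
  rw [mul_sub, mul_one, ← hpow, eq_sub_iff_add_eq]
  exact_mod_cast hsum

theorem le_card_edgeFreeSets (I : Finset ι) :
    2 ^ Fintype.card α * ∏ i ∈ I, (1 - (1 / 2 : ℝ) ^ #(T i)) ≤ #(edgeFreeSets T I) := by
  classical
  induction I using Finset.induction_on with
  | empty => simp
  | insert i I hi ih =>
    have harris := (isLowerSet_edgeFreeSets T I).le_card_inter_finset
      (isLowerSet_edgeFreeSets T {i})
    have harris' : (#(edgeFreeSets T I) : ℝ) * #(edgeFreeSets T {i})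
        ≤ 2 ^ Fintype.card α * #(edgeFreeSets T (insert i I)) := by
      rw [edgeFreeSets_insert]; exact_mod_cast harris
    rw [card_edgeFreeSets_singleton] at harris'
    have hfac : 0 ≤ 1 - (1 / 2 : ℝ) ^ #(T i) :=
      sub_nonneg.2 (pow_le_one₀ (by norm_num) (by norm_num))
    rw [prod_insert hi]
    refine le_of_mul_le_mul_left ?_ (by positivity : (0 : ℝ) < 2 ^ Fintype.card α)
    calc 2 ^ Fintype.card α * (2 ^ Fintype.card α * ((1 - (1 / 2) ^ #(T i))
          * ∏ j ∈ I, (1 - (1 / 2 : ℝ) ^ #(T j))))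
        = (2 ^ Fintype.card α * ∏ j ∈ I, (1 - (1 / 2 : ℝ) ^ #(T j)))
          * (2 ^ Fintype.card α * (1 - (1 / 2) ^ #(T i))) := by ring
      _ ≤ #(edgeFreeSets T I) * (2 ^ Fintype.card α * (1 - (1 / 2) ^ #(T i))) :=
        mul_le_mul_of_nonneg_right ih (by positivity)
      _ ≤ _ := harris'

end EdgeFreeSets

theorem indepCount_eq_card_edgeFreeSets {V : Type*} [Fintype V] [DecidableEq V]
    (H : SimpleGraph V) [DecidableRel H.Adj] :
    indepCount H = #(edgeFreeSets Sym2.toFinset H.edgeFinset) := by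
  rw [indepCount, Nat.card_eq_fintype_card, Fintype.card_subtype, edgeFreeSets]
  congr 1
  ext s
  simp only [mem_filter, mem_univ, true_and, Sym2.forall, mem_edgeFinset, mem_edgeSet,
    Sym2.toFinset_mk_eq, insert_subset_iff, singleton_subset_iff]
  exact ⟨fun h u v huv ⟨hu, hv⟩ => h u hu v hv huv, fun h u hu v hv huv => h u v huv ⟨hu, hv⟩⟩

theorem stmt_1 {V : Type*} [Fintype V] (H : SimpleGraph V) :
    (indepCount H : ℝ) ≥ 2 ^ (Fintype.card V) * (3 / 4) ^ (Nat.card H.edgeSet) := by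
  classical
  have hedge : ∀ e ∈ H.edgeFinset, 1 - (1 / 2 : ℝ) ^ #e.toFinset = 3 / 4 := fun e he => by
    rw [Sym2.card_toFinset_of_not_isDiag e (not_isDiag_of_mem_edgeSet H (mem_edgeFinset.1 he))]
    norm_num
  rw [indepCount_eq_card_edgeFreeSets, Nat.card_eq_fintype_card, ← edgeFinset_card,
    ← prod_const, ← prod_congr rfl hedge]
  exact le_card_edgeFreeSets _ _
end

section
/- Among all trees on n vertices, the path P_n has the smallest number of independent sets: for every tree T on n vertices, i(T) ≥ i(P_n). -/
open SimpleGraph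

/-!
Deleting a vertex `v` splits the independent sets of `G` into those avoiding `v` and those
containing it, so `i(G) = i(G - v) + i(G - N[v])`. A forest always has a vertex `v` of degree at
most one (an end of a longest path), and then `G - N[v]` has at least `n - 2` vertices; by induction
and monotonicity of the Fibonacci numbers every forest on `n` vertices has `i ≥ F (n + 2)`.
On the path the same recursion at an end vertex gives `i(Pₙ) = F (n + 2)` exactly.

To delete vertices without changing the vertex type, we count the independent sets of a fixed
graph inside a finset of vertices.
-/

open Finset

namespace SimpleGraph

variable {V : Type*}

lemma isIndepSet_insert (G : SimpleGraph V) {a : V} {s : Set V} :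
    G.IsIndepSet (insert a s) ↔ G.IsIndepSet s ∧ ∀ b ∈ s, a ≠ b → ¬G.Adj a b := by
  simp only [IsIndepSet, Set.pairwise_insert, G.adj_comm _ a, and_self]

theorem IsAcyclic.exists_subsingleton_neighborSet [Finite V] [Nonempty V] {G : SimpleGraph V}
    (hG : G.IsAcyclic) : ∃ v, (G.neighborSet v).Subsingleton := by
  obtain ⟨u, v, p, hp, hmax⟩ := Walk.exists_isPath_forall_isPath_length_le_length G
  have h_snd : ∀ w, G.Adj u w → w = p.snd := fun w hw ↦ hG.eq_snd_of_adj_start hp hw <| by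
    by_contra hwp
    have := hmax _ _ _ (hp.cons hwp (h := hw.symm))
    simp at this
  exact ⟨u, fun a ha b hb ↦ (h_snd a ha).trans (h_snd b hb).symm⟩

theorem IsAcyclic.exists_mem_card_adj_le_one {G : SimpleGraph V} [DecidableRel G.Adj]
    (hG : G.IsAcyclic) {s : Finset V} (hs : s.Nonempty) :
    ∃ v ∈ s, #{u ∈ s | G.Adj v u} ≤ 1 := by
  have : Nonempty s := hs.to_subtype
  obtain ⟨⟨v, hv⟩, hsub⟩ := (hG.induce s).exists_subsingleton_neighborSet
  refine ⟨v, hv, card_le_one.mpr fun a ha b hb ↦ ?_⟩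
  rw [mem_filter] at ha hb
  exact congrArg Subtype.val (@hsub ⟨a, ha.1⟩ ha.2 ⟨b, hb.1⟩ hb.2)

section IndepCountOn

variable (G : SimpleGraph V) [DecidableEq V] [DecidableRel G.Adj]

def indepCountOn (s : Finset V) : ℕ := #(s.powerset.filter fun t : Finset V ↦ G.IsIndepSet t)

lemma indepCount_eq_indepCountOn_univ [Fintype V] : indepCount G = G.indepCountOn univ := by
  rw [indepCount, indepCountOn, ← Nat.card_eq_finsetCard]
  refine Nat.card_congr (Equiv.subtypeEquivRight fun t ↦ ?_)
  simp only [mem_filter, mem_powerset, subset_univ, true_and, IsIndepSet, Set.Pairwise, mem_coe]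
  exact ⟨fun h u hu v hv _ ↦ h u hu v hv, fun h u hu v hv huv ↦
    h hu hv (G.ne_of_adj huv) huv⟩

@[simp]
lemma indepCountOn_empty : G.indepCountOn ∅ = 1 := by
  simp [indepCountOn, filter_singleton]

lemma indepCountOn_eq_add_of_mem {s : Finset V} {v : V} (hv : v ∈ s) :
    G.indepCountOn s =
      G.indepCountOn (s.erase v) + G.indepCountOn {u ∈ s | u ≠ v ∧ ¬G.Adj v u} := by
  rw [indepCountOn, ← card_filter_add_card_filter_not (fun t ↦ v ∉ t)]
  congr 1
  · congr 1
    ext t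
    simp only [mem_filter, mem_powerset, subset_erase]
    tauto
  · refine card_nbij' (·.erase v) (insert v) ?_ ?_ ?_ ?_
    · intro t ht
      simp only [mem_coe, mem_filter, mem_powerset, not_not] at ht ⊢
      obtain ⟨⟨hts, hind⟩, hvt⟩ := ht
      refine ⟨fun u hu ↦ ?_, hind.mono (coe_subset.mpr (erase_subset v t))⟩
      obtain ⟨huv, hut⟩ := mem_erase.mp hu
      exact mem_filter.mpr ⟨hts hut, huv, hind hvt hut (Ne.symm huv)⟩
    · intro t ht
      simp only [mem_coe, mem_filter, mem_powerset, not_not, coe_insert, isIndepSet_insert]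
        at ht ⊢
      obtain ⟨hts, hind⟩ := ht
      refine ⟨⟨insert_subset hv fun u hu ↦ (mem_filter.mp (hts hu)).1, hind,
        fun u hu _ ↦ (mem_filter.mp (hts hu)).2.2⟩, mem_insert_self v t⟩
    · intro t ht
      simp only [mem_coe, mem_filter] at ht
      exact insert_erase (not_not.mp ht.2)
    · intro t ht
      simp only [mem_coe, mem_filter, mem_powerset] at ht
      exact erase_insert fun hv ↦ (mem_filter.mp (ht.1 hv)).2.1 rfl

end IndepCountOn

theorem IsAcyclic.fib_le_indepCountOn {G : SimpleGraph V} [DecidableEq V] [DecidableRel G.Adj]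
    (hG : G.IsAcyclic) (s : Finset V) : Nat.fib (#s + 2) ≤ G.indepCountOn s := by
  induction s using Finset.strongInduction with
  | H s ih =>
  obtain rfl | hs := s.eq_empty_or_nonempty
  · simp
  obtain ⟨v, hv, hdeg⟩ := hG.exists_mem_card_adj_le_one hs
  set far := {u ∈ s | u ≠ v ∧ ¬G.Adj v u}
  have h_erase : #(s.erase v) + 1 = #s := card_erase_add_one hv
  have h_far : #s ≤ #far + 2 := calc
    #s ≤ #(far ∪ insert v {u ∈ s | G.Adj v u}) := card_le_card fun u hu ↦ by
      simp only [far, mem_union, mem_insert, mem_filter]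
      tauto
    _ ≤ #far + 2 := (card_union_le _ _).trans (by grw [card_insert_le, hdeg])
  calc Nat.fib (#s + 2) = Nat.fib #s + Nat.fib (#s + 1) := Nat.fib_add_two
    _ ≤ Nat.fib (#far + 2) + Nat.fib (#(s.erase v) + 2) :=
      add_le_add (Nat.fib_mono h_far) (Nat.fib_mono (by omega))
    _ ≤ G.indepCountOn far + G.indepCountOn (s.erase v) :=
      add_le_add (ih _ (filter_ssubset.mpr ⟨v, hv, by simp⟩)) (ih _ (erase_ssubset hv))
    _ = G.indepCountOn s := by rw [G.indepCountOn_eq_add_of_mem hv, add_comm]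

theorem IsAcyclic.fib_card_add_two_le_indepCount [Fintype V] {G : SimpleGraph V}
    (hG : G.IsAcyclic) : Nat.fib (Fintype.card V + 2) ≤ indepCount G := by
  classical
  rw [indepCount_eq_indepCountOn_univ, ← card_univ]
  exact hG.fib_le_indepCountOn univ

theorem indepCountOn_pathGraph_filter_lt {n : ℕ} [DecidableRel (pathGraph n).Adj] :
    ∀ k ≤ n, (pathGraph n).indepCountOn {i : Fin n | (i : ℕ) < k} = Nat.fib (k + 2)
  | 0, _ => by simp
  | k + 1, hk => by
    have hv : (⟨k, hk⟩ : Fin n) ∈ ({i : Fin n | (i : ℕ) < k + 1} : Finset (Fin n)) := by simp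
    have h_erase : ({i : Fin n | (i : ℕ) < k + 1} : Finset (Fin n)).erase ⟨k, hk⟩ =
        ({i : Fin n | (i : ℕ) < k} : Finset (Fin n)) := by
      ext i
      simp only [mem_erase, ne_eq, Fin.ext_iff, mem_filter, mem_univ, true_and]
      omega
    have h_far : ({u ∈ {i : Fin n | (i : ℕ) < k + 1} | u ≠ ⟨k, hk⟩ ∧
        ¬(pathGraph n).Adj ⟨k, hk⟩ u} : Finset (Fin n)) =
        ({i : Fin n | (i : ℕ) < k - 1} : Finset (Fin n)) := by
      ext i
      simp only [ne_eq, Fin.ext_iff, pathGraph_adj, not_or, mem_filter, mem_univ, true_and]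
      omega
    rw [indepCountOn_eq_add_of_mem _ hv, h_erase, h_far,
      indepCountOn_pathGraph_filter_lt k (by omega),
      indepCountOn_pathGraph_filter_lt (k - 1) (by omega)]
    rcases k with _ | k
    · rfl
    · rw [Nat.add_sub_cancel, add_comm, ← Nat.fib_add_two]

theorem indepCount_pathGraph (n : ℕ) : indepCount (pathGraph n) = Nat.fib (n + 2) := by
  classical
  rw [indepCount_eq_indepCountOn_univ, ← indepCountOn_pathGraph_filter_lt n le_rfl]
  congr
  ext i
  simp

end SimpleGraph

theorem stmt_8 {V : Type*} [Fintype V] (T : SimpleGraph V) (hT : T.IsTree) (n : ℕ)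
    (hn : Fintype.card V = n) :
    indepCount T ≥ indepCount (SimpleGraph.pathGraph n) := by
  rw [indepCount_pathGraph, ← hn]
  exact hT.isAcyclic.fib_card_add_two_le_indepCount
end

section
/- Let H = (A,B,E) be a bipartite graph, q ≥ 1, and let c be a uniformly random proper coloring of H with q colors (assuming at least one exists). If u ∈ A and v ∈ B are distinct vertices, then P(c(u) = c(v)) ≤ 1/q. -/
/-!
Given a proper colouring `c` with `c u = c v` and any colour `k`, swap the colours `c v` and `k`
on the `(c v, k)`-Kempe chain through `v`. The result `d` is again proper and `d v = k`. Along a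
Kempe chain the two colours alternate with the sides of the bipartition, so every vertex of the
chain through `v` that lies on `u`'s side has colour `k`; hence `u` is not on it (unless `k = c v`,
when the swap is trivial) and `d u = c u`. As the swap is an involution, `c` is recovered from `d`
and the pair `(d u, d v)`, so `(c, k) ↦ d` is injective and
`q · #{c proper, c u = c v} ≤ #{c proper}`.
-/

open SimpleGraph

/-- Number of proper colorings of a graph with q colors. -/
noncomputable def chrom {V : Type*} (H : SimpleGraph V) (q : ℕ) : ℕ :=
  Nat.card {c : V → Fin q // ∀ a b, H.Adj a b → c a ≠ c b}

lemma Equiv.swap_apply_eq_or_eq_iff {α : Type*} [DecidableEq α] {x y z : α} :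
    (Equiv.swap x y z = x ∨ Equiv.swap x y z = y) ↔ (z = x ∨ z = y) := by
  rw [Equiv.swap_apply_def]
  split_ifs <;> simp_all [eq_comm]

namespace SimpleGraph

variable {V α : Type*} (H : SimpleGraph V)

def kempeGraph (c : V → α) (x y : α) : SimpleGraph V where
  Adj a b := H.Adj a b ∧ (c a = x ∨ c a = y) ∧ (c b = x ∨ c b = y)
  symm := ⟨fun _ _ h => ⟨h.1.symm, h.2.2, h.2.1⟩⟩
  loopless := ⟨fun a h => H.loopless.irrefl a h.1⟩

variable {H} {A : Set V} {c : V → α}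

lemma Walk.kempeGraph_side (hbip : ∀ a b, H.Adj a b → (a ∈ A ↔ b ∉ A))
    (hc : ∀ a b, H.Adj a b → c a ≠ c b) {x y : α} {a b : V} (p : (H.kempeGraph c x y).Walk a b)
    (ha : (a ∉ A ∧ c a = x) ∨ (a ∈ A ∧ c a = y)) : (b ∉ A ∧ c b = x) ∨ (b ∈ A ∧ c b = y) := by
  induction p with
  | nil => exact ha
  | @cons s t b hst p ih =>
    obtain ⟨hH, -, ht⟩ := hst
    have hne := hc s t hH
    have hside := hbip s t hH
    apply ih
    rcases ha with ⟨hs, hcs⟩ | ⟨hs, hcs⟩ <;> rcases ht with hct | hct <;>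
      simp_all

lemma not_reachable_kempeGraph (hbip : ∀ a b, H.Adj a b → (a ∈ A ↔ b ∉ A))
    (hc : ∀ a b, H.Adj a b → c a ≠ c b) {u v : V} (hu : u ∈ A) (hv : v ∉ A) (hcuv : c u = c v)
    {y : α} (hy : y ≠ c v) : ¬ (H.kempeGraph c (c v) y).Reachable v u := by
  rintro ⟨p⟩
  rcases Walk.kempeGraph_side hbip hc p (.inl ⟨hv, rfl⟩) with ⟨hu', -⟩ | ⟨-, hcu⟩
  · exact hu' hu
  · exact hy (hcu ▸ hcuv)

variable (H) [DecidableEq α]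

open Classical in
noncomputable def kempeSwap (x y : α) (v : V) (c : V → α) : V → α := fun w =>
  if (H.kempeGraph c x y).Reachable v w then Equiv.swap x y (c w) else c w

variable {H}

lemma swap_apply_ne_of_reachable_of_not_reachable (hc : ∀ a b, H.Adj a b → c a ≠ c b)
    {x y : α} {v a b : V} (hab : H.Adj a b) (ha : (H.kempeGraph c x y).Reachable v a)
    (hb : ¬ (H.kempeGraph c x y).Reachable v b) : Equiv.swap x y (c a) ≠ c b := by
  by_cases hca : c a = x ∨ c a = y
  · have hcb : ¬ (c b = x ∨ c b = y) := fun hcb => hb (ha.trans (Adj.reachable ⟨hab, hca, hcb⟩))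
    intro h
    exact hcb (h ▸ Equiv.swap_apply_eq_or_eq_iff.mpr hca)
  · push Not at hca
    rw [Equiv.swap_apply_of_ne_of_ne hca.1 hca.2]
    exact hc a b hab

lemma kempeSwap_proper (hc : ∀ a b, H.Adj a b → c a ≠ c b) (x y : α) (v : V) :
    ∀ a b, H.Adj a b → H.kempeSwap x y v c a ≠ H.kempeSwap x y v c b := by
  intro a b hab
  simp only [kempeSwap]
  split_ifs with ha hb hb
  · exact (Equiv.injective _).ne (hc a b hab)
  · exact swap_apply_ne_of_reachable_of_not_reachable hc hab ha hb
  · exact (swap_apply_ne_of_reachable_of_not_reachable hc hab.symm hb ha).symm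
  · exact hc a b hab

lemma kempeGraph_kempeSwap (x y : α) (v : V) (c : V → α) :
    H.kempeGraph (H.kempeSwap x y v c) x y = H.kempeGraph c x y := by
  have hcol : ∀ w, (H.kempeSwap x y v c w = x ∨ H.kempeSwap x y v c w = y) ↔
      (c w = x ∨ c w = y) := by
    intro w
    simp only [kempeSwap]
    split_ifs
    · exact Equiv.swap_apply_eq_or_eq_iff
    · rfl
  ext a b
  simp only [kempeGraph, hcol]

lemma kempeSwap_kempeSwap (x y : α) (v : V) (c : V → α) :
    H.kempeSwap x y v (H.kempeSwap x y v c) = c := by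
  funext w
  rw [kempeSwap, kempeGraph_kempeSwap]
  simp only [kempeSwap]
  split_ifs <;> simp

lemma kempeSwap_apply_self (x y : α) (v : V) (c : V → α) :
    H.kempeSwap x y v c v = Equiv.swap x y (c v) := by
  simp [kempeSwap]

lemma kempeSwap_apply_of_mem_of_not_mem (hbip : ∀ a b, H.Adj a b → (a ∈ A ↔ b ∉ A))
    (hc : ∀ a b, H.Adj a b → c a ≠ c b) {u v : V} (hu : u ∈ A) (hv : v ∉ A)
    (hcuv : c u = c v) (y : α) : H.kempeSwap (c v) y v c u = c u := by
  rcases eq_or_ne y (c v) with rfl | hy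
  · simp [kempeSwap]
  · simp [kempeSwap, not_reachable_kempeGraph hbip hc hu hv hcuv hy]

theorem card_proper_eq_mul_card_le [Finite V] [Finite α]
    (hbip : ∀ a b, H.Adj a b → (a ∈ A ↔ b ∉ A)) {u v : V} (hu : u ∈ A) (hv : v ∉ A) :
    Nat.card {c : V → α // (∀ a b, H.Adj a b → c a ≠ c b) ∧ c u = c v} * Nat.card α ≤
      Nat.card {c : V → α // ∀ a b, H.Adj a b → c a ≠ c b} := by
  rw [← Nat.card_prod]
  refine Nat.card_le_card_of_injective
    (fun p => ⟨H.kempeSwap (p.1.1 v) p.2 v p.1.1, kempeSwap_proper p.1.2.1 _ _ _⟩) ?_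
  rintro ⟨⟨c, hc, hcuv⟩, k⟩ ⟨⟨c', hc', hcuv'⟩, k'⟩ h
  simp only [Subtype.mk.injEq] at h
  have hk : k = k' := by simpa [kempeSwap_apply_self] using congrFun h v
  have hcv : c v = c' v := by
    rw [← hcuv, ← hcuv', ← kempeSwap_apply_of_mem_of_not_mem hbip hc hu hv hcuv k, h,
      kempeSwap_apply_of_mem_of_not_mem hbip hc' hu hv hcuv' k']
  have hcc' : c = c' := by
    rw [← kempeSwap_kempeSwap (c v) k v c, h, hcv, hk, kempeSwap_kempeSwap]
  subst hk hcc'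
  rfl

end SimpleGraph

theorem stmt_9_general {V : Type*} [Fintype V] (H : SimpleGraph V) (A : Set V)
    (hbip : ∀ a b, H.Adj a b → (a ∈ A ↔ b ∉ A)) (q : ℕ)
    (u v : V) (hu : u ∈ A) (hv : v ∉ A) :
    (Nat.card {c : V → Fin q // (∀ a b, H.Adj a b → c a ≠ c b) ∧ c u = c v} : ℝ) /
      (chrom H q : ℝ) ≤ 1 / q := by
  rcases Nat.eq_zero_or_pos q with rfl | hq
  · have : IsEmpty (V → Fin 0) := ⟨fun c => (c u).elim0⟩
    simp
  have key := H.card_proper_eq_mul_card_le (α := Fin q) hbip hu hv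
  rw [Nat.card_fin] at key
  refine div_le_of_le_mul₀ (by positivity) (by positivity) ?_
  rw [one_div_mul_eq_div, le_div_iff₀ (Nat.cast_pos.mpr hq)]
  exact_mod_cast key

theorem stmt_9 {V : Type*} [Fintype V] (H : SimpleGraph V) (A : Set V)
    (hbip : ∀ a b, H.Adj a b → (a ∈ A ↔ b ∉ A)) (q : ℕ) (hq : 1 ≤ q)
    (hex : 0 < chrom H q) (u v : V) (hu : u ∈ A) (hv : v ∉ A) (huv : u ≠ v) :
    (Nat.card {c : V → Fin q // (∀ a b, H.Adj a b → c a ≠ c b) ∧ c u = c v} : ℝ) /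
      (chrom H q : ℝ) ≤ 1 / q :=
  stmt_9_general H A hbip q u v hu hv
end

section
/- For any graph H and any edge e of H, wr(H)/wr(H-e) ≥ 7/9, where wr(G) counts Widom-Rowlinson configurations of G. -/
open SimpleGraph

/-- Number of Widom-Rowlinson configurations of a graph: colorings of the vertices with
red (0), white (1) and blue (2) such that no red vertex is adjacent to a blue vertex. -/
noncomputable def wrCount {V : Type*} (H : SimpleGraph V) : ℕ :=
  Nat.card {c : V → Fin 3 // ∀ a b, H.Adj a b → ¬(c a = 0 ∧ c b = 2)}

/-!
Let `G = H - uv` and let `m (i, j)` count the Widom-Rowlinson colorings `c` of `G` with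
`(c u, c v) = (i, j)`. The colorings of `H` are those of `G` outside the fibers `(0, 2)` and
`(2, 0)`, and the two have the same size by the red-blue symmetry, so
`wr(H) = wr(G) - 2 m (0, 2)`. Every fiber is at least as large as `m (0, 2)`: recoloring `u`
and/or `v` white injects it into `(0, 1)`, `(1, 2)` and `(1, 1)`; recoloring the blue cluster
of `v` red injects it into `(0, 0)`; the red-blue symmetry covers the remaining fibers. Hence
`9 m (0, 2) ≤ wr(G)`, and `wr(H) ≥ wr(G) - 2 wr(G) / 9 = 7 wr(G) / 9`.
-/

open Finset

open scoped Classical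

lemma SimpleGraph.Reachable.mem_of_forall_adj {V : Type*} {G : SimpleGraph V} {a b : V}
    (h : G.Reachable a b) {s : Set V} (hs : ∀ x y, G.Adj x y → x ∈ s → y ∈ s) (ha : a ∈ s) :
    b ∈ s := by
  rw [reachable_iff_reflTransGen] at h
  induction h with
  | refl => exact ha
  | tail _ hxy ih => exact hs _ _ hxy ih

namespace WidomRowlinson

section Coloring

variable {V : Type*} (G : SimpleGraph V)

def IsWRColoring (c : V → Fin 3) : Prop :=
  ∀ a b, G.Adj a b → ¬(c a = 0 ∧ c b = 2)

variable {G}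

lemma IsWRColoring.anti {H : SimpleGraph V} (hGH : G ≤ H) {c : V → Fin 3}
    (hc : IsWRColoring H c) : IsWRColoring G c :=
  fun a b hab => hc a b (hGH hab)

lemma IsWRColoring.of_forall_eq_or_eq_one {c c' : V → Fin 3} (hc : IsWRColoring G c)
    (hc' : ∀ w, c' w = c w ∨ c' w = 1) : IsWRColoring G c' := by
  rintro a b hab ⟨ha, hb⟩
  obtain ha' | ha' := hc' a <;> obtain hb' | hb' := hc' b
  · exact hc a b hab ⟨ha' ▸ ha, hb' ▸ hb⟩
  all_goals simp_all

lemma IsWRColoring.rev {c : V → Fin 3} (hc : IsWRColoring G c) :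
    IsWRColoring G (Fin.rev ∘ c) := by
  rintro a b hab ⟨ha, hb⟩
  refine hc b a hab.symm ⟨?_, ?_⟩
  · simpa [Fin.rev_eq_iff] using hb
  · simpa [Fin.rev_eq_iff] using ha

lemma isWRColoring_iff_deleteEdges {H : SimpleGraph V} {u v : V} (he : H.Adj u v)
    (c : V → Fin 3) :
    IsWRColoring H c ↔ IsWRColoring (H.deleteEdges {s(u, v)}) c ∧
      (c u, c v) ≠ (0, 2) ∧ (c u, c v) ≠ (2, 0) := by
  refine ⟨fun hc => ⟨hc.anti (deleteEdges_le _), ?_, ?_⟩, ?_⟩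
  · simpa using hc u v he
  · simpa [and_comm] using hc v u he.symm
  · rintro ⟨hc, h02, h20⟩ a b hab hab'
    by_cases hs : s(a, b) = s(u, v)
    · rcases Sym2.eq_iff.mp hs with ⟨rfl, rfl⟩ | ⟨rfl, rfl⟩ <;> simp_all
    · exact hc a b (by simpa [deleteEdges_adj, hab] using hs) hab'

end Coloring

section ColorClassGraph

variable {V α : Type*}

def colorClassGraph (G : SimpleGraph V) (c : V → α) (k : α) : SimpleGraph V where
  Adj a b := G.Adj a b ∧ c a = k ∧ c b = k
  symm := ⟨fun _ _ h => ⟨h.1.symm, h.2.2, h.2.1⟩⟩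
  loopless := ⟨fun a h => G.loopless.irrefl a h.1⟩

lemma eq_of_reachable_colorClassGraph {G : SimpleGraph V} {c : V → α} {k : α} {v w : V}
    (hv : c v = k) (h : (colorClassGraph G c k).Reachable v w) : c w = k :=
  h.mem_of_forall_adj (s := {x | c x = k}) (fun _ _ hxy _ => hxy.2.2) hv

end ColorClassGraph

section ClusterRecoloring

variable {V : Type*} {G : SimpleGraph V} {v w : V} {c : V → Fin 3}

variable (G v) in
noncomputable def recolorCluster (c : V → Fin 3) (k k' : Fin 3) : V → Fin 3 :=
  fun w => if (colorClassGraph G c k).Reachable v w then k' else c w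

lemma recolorCluster_of_reachable {k k' : Fin 3} (h : (colorClassGraph G c k).Reachable v w) :
    recolorCluster G v c k k' w = k' :=
  if_pos h

lemma recolorCluster_of_not_reachable {k k' : Fin 3}
    (h : ¬(colorClassGraph G c k).Reachable v w) : recolorCluster G v c k k' w = c w :=
  if_neg h

lemma IsWRColoring.recolorCluster (hc : IsWRColoring G c) (hv : c v = 2) :
    IsWRColoring G (recolorCluster G v c 2 0) := by
  rintro a b hab ⟨ha, hb⟩
  have hb' : ¬(colorClassGraph G c 2).Reachable v b := fun h => by
    simp [recolorCluster_of_reachable h] at hb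
  rw [recolorCluster_of_not_reachable hb'] at hb
  by_cases ha' : (colorClassGraph G c 2).Reachable v a
  · exact hb' (ha'.trans (Adj.reachable ⟨hab, eq_of_reachable_colorClassGraph hv ha', hb⟩))
  · rw [recolorCluster_of_not_reachable ha'] at ha
    exact hc a b hab ⟨ha, hb⟩

lemma reachable_recolorCluster_iff (hc : IsWRColoring G c) (hv : c v = 2) :
    (colorClassGraph G (recolorCluster G v c 2 0) 0).Reachable v w ↔
      (colorClassGraph G c 2).Reachable v w := by
  constructor
  · refine fun h => h.mem_of_forall_adj (s := {x | (colorClassGraph G c 2).Reachable v x}) ?_ .rfl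
    intro a b hab ha
    by_contra hb
    have hcb : c b = 0 := by simpa [recolorCluster_of_not_reachable hb] using hab.2.2
    exact hc b a hab.1.symm ⟨hcb, eq_of_reachable_colorClassGraph hv ha⟩
  · refine fun h => (h.mem_of_forall_adj (s := {x | (colorClassGraph G c 2).Reachable v x ∧
      (colorClassGraph G (recolorCluster G v c 2 0) 0).Reachable v x}) ?_ ⟨.rfl, .rfl⟩).2
    rintro a b hab ⟨ha₁, ha₂⟩
    have hb₁ := ha₁.trans hab.reachable
    exact ⟨hb₁, ha₂.trans (Adj.reachable
      ⟨hab.1, recolorCluster_of_reachable ha₁, recolorCluster_of_reachable hb₁⟩)⟩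

lemma recolorCluster_recolorCluster (hc : IsWRColoring G c) (hv : c v = 2) :
    recolorCluster G v (recolorCluster G v c 2 0) 0 2 = c := by
  funext w
  by_cases h : (colorClassGraph G c 2).Reachable v w
  · rw [recolorCluster_of_reachable ((reachable_recolorCluster_iff hc hv).2 h),
      eq_of_reachable_colorClassGraph hv h]
  · rw [recolorCluster_of_not_reachable (mt (reachable_recolorCluster_iff hc hv).1 h),
      recolorCluster_of_not_reachable h]

end ClusterRecoloring

section Fibers

variable {V : Type*} [Fintype V] {G : SimpleGraph V} {u v : V}

variable (G) in
noncomputable def wrColorings : Finset (V → Fin 3) := {c | IsWRColoring G c}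

variable (G u v) in
noncomputable def wrFiber (p : Fin 3 × Fin 3) : Finset (V → Fin 3) :=
  {c ∈ wrColorings G | (c u, c v) = p}

@[simp]
lemma mem_wrFiber {c : V → Fin 3} {i j : Fin 3} :
    c ∈ wrFiber G u v (i, j) ↔ IsWRColoring G c ∧ c u = i ∧ c v = j := by
  simp [wrFiber, wrColorings]

variable (G) in
lemma wrCount_eq_card_wrColorings : wrCount G = #(wrColorings G) := by
  simp [wrCount, wrColorings, IsWRColoring, Nat.card_eq_fintype_card, Fintype.card_subtype]

variable (G u v) in
lemma wrCount_eq_sum_card_wrFiber : wrCount G = ∑ p, #(wrFiber G u v p) := by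
  rw [wrCount_eq_card_wrColorings]
  exact card_eq_sum_card_fiberwise fun _ _ => mem_univ _

variable (G) in
lemma wrCount_pos : 0 < wrCount G := by
  rw [wrCount_eq_card_wrColorings, card_pos]
  exact ⟨fun _ => 1, by simp [wrColorings, IsWRColoring]⟩

variable (G u v) in
lemma card_wrFiber_rev (i j : Fin 3) :
    #(wrFiber G u v (i.rev, j.rev)) = #(wrFiber G u v (i, j)) := by
  refine card_nbij' (Fin.rev ∘ ·) (Fin.rev ∘ ·) ?_ ?_ ?_ ?_ <;> intro c hc
  · simp_all [IsWRColoring.rev]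
  · simp_all [IsWRColoring.rev]
  · ext; simp
  · ext; simp

lemma card_wrFiber_le_of_whiten (huv : u ≠ v) {i j i' j' : Fin 3} (hi : i' = i ∨ i' = 1)
    (hj : j' = j ∨ j' = 1) : #(wrFiber G u v (i, j)) ≤ #(wrFiber G u v (i', j')) := by
  let recolor (c : V → Fin 3) (a b : Fin 3) : V → Fin 3 :=
    fun w => if w = u then a else if w = v then b else c w
  refine card_le_card_of_injOn (recolor · i' j') ?_ ?_
  · intro c hc
    simp only [mem_coe, mem_wrFiber] at hc ⊢
    refine ⟨hc.1.of_forall_eq_or_eq_one fun w => ?_, by simp [recolor],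
      by simp [recolor, huv.symm]⟩
    by_cases hwu : w = u
    · simpa [recolor, hwu, hc.2.1] using hi
    by_cases hwv : w = v
    · simpa [recolor, hwv, hc.2.2, huv.symm] using hj
    · simp [recolor, hwu, hwv]
  · intro c₁ hc₁ c₂ hc₂ h
    simp only [mem_coe, mem_wrFiber] at hc₁ hc₂
    have key (c : V → Fin 3) (hu : c u = i) (hv : c v = j) :
        recolor (recolor c i' j') i j = c := by
      ext w
      by_cases hwu : w = u <;> by_cases hwv : w = v <;> simp [recolor, hwu, hwv, hu, hv, huv.symm]
    rw [← key c₁ hc₁.2.1 hc₁.2.2, ← key c₂ hc₂.2.1 hc₂.2.2]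
    exact congrArg (recolor · i j) h

lemma card_wrFiber_zero_two_le_zero_zero :
    #(wrFiber G u v (0, 2)) ≤ #(wrFiber G u v (0, 0)) := by
  refine card_le_card_of_injOn (recolorCluster G v · 2 0) ?_ ?_
  · intro c hc
    simp only [mem_coe, mem_wrFiber] at hc ⊢
    obtain ⟨hc, hu, hv⟩ := hc
    refine ⟨hc.recolorCluster hv, ?_, recolorCluster_of_reachable (.refl v)⟩
    rw [recolorCluster_of_not_reachable fun h => ?_, hu]
    simpa [hu] using eq_of_reachable_colorClassGraph hv h
  · intro c₁ hc₁ c₂ hc₂ h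
    simp only [mem_coe, mem_wrFiber] at hc₁ hc₂
    rw [← recolorCluster_recolorCluster hc₁.1 hc₁.2.2,
      ← recolorCluster_recolorCluster hc₂.1 hc₂.2.2]
    exact congrArg (recolorCluster G v · 0 2) h

lemma card_wrFiber_zero_two_le (huv : u ≠ v) (p : Fin 3 × Fin 3) :
    #(wrFiber G u v (0, 2)) ≤ #(wrFiber G u v p) := by
  have h00 : #(wrFiber G u v (0, 2)) ≤ #(wrFiber G u v (0, 0)) :=
    card_wrFiber_zero_two_le_zero_zero
  have h01 : #(wrFiber G u v (0, 2)) ≤ #(wrFiber G u v (0, 1)) :=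
    card_wrFiber_le_of_whiten huv (.inl rfl) (.inr rfl)
  have h11 : #(wrFiber G u v (0, 2)) ≤ #(wrFiber G u v (1, 1)) :=
    card_wrFiber_le_of_whiten huv (.inr rfl) (.inr rfl)
  have h12 : #(wrFiber G u v (0, 2)) ≤ #(wrFiber G u v (1, 2)) :=
    card_wrFiber_le_of_whiten huv (.inr rfl) (.inl rfl)
  obtain ⟨i, j⟩ := p
  fin_cases i <;> fin_cases j
  exacts [h00, h01, le_rfl, h12.trans_eq (card_wrFiber_rev G u v 1 2).symm, h11, h12,
    (card_wrFiber_rev G u v 0 2).symm.le, h01.trans_eq (card_wrFiber_rev G u v 0 1).symm,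
    h00.trans_eq (card_wrFiber_rev G u v 0 0).symm]

lemma nine_mul_card_wrFiber_zero_two_le (huv : u ≠ v) :
    9 * #(wrFiber G u v (0, 2)) ≤ wrCount G := by
  rw [wrCount_eq_sum_card_wrFiber G u v]
  simpa using card_nsmul_le_sum univ (fun p => #(wrFiber G u v p)) _
    fun p _ => card_wrFiber_zero_two_le huv p

lemma wrColorings_deleteEdges {H : SimpleGraph V} (he : H.Adj u v) :
    wrColorings (H.deleteEdges {s(u, v)}) = wrColorings H ∪
      (wrFiber (H.deleteEdges {s(u, v)}) u v (0, 2) ∪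
        wrFiber (H.deleteEdges {s(u, v)}) u v (2, 0)) := by
  ext c
  simp only [mem_union, mem_wrFiber, wrColorings, mem_filter, mem_univ, true_and,
    isWRColoring_iff_deleteEdges he c, ne_eq, Prod.mk.injEq]
  tauto

lemma wrCount_deleteEdges {H : SimpleGraph V} (he : H.Adj u v) :
    wrCount (H.deleteEdges {s(u, v)}) =
      wrCount H + 2 * #(wrFiber (H.deleteEdges {s(u, v)}) u v (0, 2)) := by
  set G := H.deleteEdges {s(u, v)}
  have hdisj_fibers : Disjoint (wrFiber G u v (0, 2)) (wrFiber G u v (2, 0)) := by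
    rw [Finset.disjoint_left]
    intro c h₀₂ h₂₀
    simp_all
  have hdisj : Disjoint (wrColorings H) (wrFiber G u v (0, 2) ∪ wrFiber G u v (2, 0)) := by
    rw [Finset.disjoint_left]
    intro c hc hc'
    have hcH := (isWRColoring_iff_deleteEdges he c).1 (by simpa [wrColorings] using hc)
    simp only [mem_union, mem_wrFiber] at hc'
    rcases hc' with ⟨-, hu, hv⟩ | ⟨-, hu, hv⟩ <;> simp [hu, hv] at hcH
  have hsymm : #(wrFiber G u v (2, 0)) = #(wrFiber G u v (0, 2)) := card_wrFiber_rev G u v 0 2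
  rw [wrCount_eq_card_wrColorings, wrCount_eq_card_wrColorings, wrColorings_deleteEdges he,
    card_union_of_disjoint hdisj, card_union_of_disjoint hdisj_fibers, hsymm, two_mul]

end Fibers

end WidomRowlinson

open WidomRowlinson in
theorem stmt_15 {V : Type*} [Fintype V] (H : SimpleGraph V) (u v : V) (he : H.Adj u v) :
    (wrCount H : ℝ) / (wrCount (H.deleteEdges {s(u, v)}) : ℝ) ≥ 7 / 9 := by
  set G := H.deleteEdges {s(u, v)}
  have hdel : wrCount G = wrCount H + 2 * #(wrFiber G u v (0, 2)) := wrCount_deleteEdges he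
  have hbound : 9 * #(wrFiber G u v (0, 2)) ≤ wrCount G := nine_mul_card_wrFiber_zero_two_le he.ne
  have key : (7 * wrCount G : ℝ) ≤ 9 * wrCount H := by
    exact_mod_cast (by omega : 7 * wrCount G ≤ 9 * wrCount H)
  rw [ge_iff_le, le_div_iff₀ (by exact_mod_cast wrCount_pos G)]
  linarith
end

section
/- For any graph H on n vertices with e(H) edges, the number of Widom-Rowlinson configurations satisfies wr(H) ≥ 3^n · (7/9)^{e(H)}. -/
open SimpleGraph

/-!
A Widom-Rowlinson configuration is a set `S` of non-white vertices together with a red/blue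
coloring of `S` that is constant on every edge of `H[S]`. Over `𝔽₂` these colorings form the
kernel of a linear map to a space of dimension `n - |S| + e(H[S])`, so there are at least
`2 ^ |S| / 2 ^ e(H[S])` of them. Weight `S` by `2 ^ |S|` (total mass `3 ^ n`). The functions
`S ↦ 1/2 if e ⊆ S, else 1` are decreasing, so by the FKG inequality the weighted average of their
product is at least the product of their averages, each of which is `1 - (1/2) (2/3)² = 7/9`.
-/

open Finset

section FKG
variable {α β ι : Type*} [DistribLattice α] [Fintype α] [CommSemiring β] [LinearOrder β]
  [IsStrictOrderedRing β] [ExistsAddOfLE β] {μ : α → β} {f : ι → α → β}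

theorem fkg_prod (hμ₀ : 0 ≤ μ) (hμ : ∀ a b, μ a * μ b ≤ μ (a ⊓ b) * μ (a ⊔ b)) (s : Finset ι)
    (hf₀ : ∀ i ∈ s, 0 ≤ f i) (hf : ∀ i ∈ s, Monotone (f i)) :
    (∑ a, μ a) * ∏ i ∈ s, ∑ a, μ a * f i a ≤ (∑ a, μ a) ^ #s * ∑ a, μ a * ∏ i ∈ s, f i a := by
  classical
  induction s using Finset.induction_on with
  | empty => simp
  | insert j s hj ih =>
    rw [forall_mem_insert] at hf₀ hf
    have hprod₀ : 0 ≤ fun a ↦ ∏ i ∈ s, f i a := fun a ↦ prod_nonneg fun i hi ↦ hf₀.2 i hi a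
    have hprod : Monotone fun a ↦ ∏ i ∈ s, f i a := fun a b hab ↦
      prod_le_prod (fun i hi ↦ hf₀.2 i hi a) fun i hi ↦ hf.2 i hi hab
    have hj₀ : 0 ≤ ∑ a, μ a * f j a := sum_nonneg fun a _ ↦ mul_nonneg (hμ₀ a) (hf₀.1 a)
    simp_rw [prod_insert hj, card_insert_of_notMem hj]
    calc (∑ a, μ a) * ((∑ a, μ a * f j a) * ∏ i ∈ s, ∑ a, μ a * f i a)
        = (∑ a, μ a * f j a) * ((∑ a, μ a) * ∏ i ∈ s, ∑ a, μ a * f i a) := by ring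
      _ ≤ (∑ a, μ a * f j a) * ((∑ a, μ a) ^ #s * ∑ a, μ a * ∏ i ∈ s, f i a) :=
        mul_le_mul_of_nonneg_left (ih hf₀.2 hf.2) hj₀
      _ = (∑ a, μ a) ^ #s * ((∑ a, μ a * f j a) * ∑ a, μ a * ∏ i ∈ s, f i a) := by ring
      _ ≤ (∑ a, μ a) ^ #s * ((∑ a, μ a) * ∑ a, μ a * (f j a * ∏ i ∈ s, f i a)) :=
        mul_le_mul_of_nonneg_left (fkg _ _ μ hμ₀ hf₀.1 hprod₀ hf.1 hprod hμ)
          (pow_nonneg (sum_nonneg fun a _ ↦ hμ₀ a) _)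
      _ = (∑ a, μ a) ^ (#s + 1) * ∑ a, μ a * (f j a * ∏ i ∈ s, f i a) := by ring

theorem fkg_prod_of_antitone (hμ₀ : 0 ≤ μ) (hμ : ∀ a b, μ a * μ b ≤ μ (a ⊓ b) * μ (a ⊔ b))
    (s : Finset ι) (hf₀ : ∀ i ∈ s, 0 ≤ f i) (hf : ∀ i ∈ s, Antitone (f i)) :
    (∑ a, μ a) * ∏ i ∈ s, ∑ a, μ a * f i a ≤ (∑ a, μ a) ^ #s * ∑ a, μ a * ∏ i ∈ s, f i a :=
  fkg_prod (α := αᵒᵈ) hμ₀ (fun a b ↦ (hμ a b).trans_eq (mul_comm _ _)) s hf₀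
    fun i hi ↦ (hf i hi).dual_left

end FKG

section Monochromatic
variable {W : Type*} [Fintype W] [DecidableEq W]

def monochromaticColorings (S : Finset W) (F : Finset (Sym2 W)) : Set (W → ZMod 2) :=
  {c | (∀ v ∉ S, c v = 0) ∧ ∀ u v, s(u, v) ∈ F → c u = c v}

/-- In characteristic two `c u + c v = 0` iff `c u = c v`, and `c u + c v` is symmetric in `u`
and `v`, hence a function of `s(u, v)`. -/
def monochromaticConstraints (S : Finset W) (F : Finset (Sym2 W)) :
    (W → ZMod 2) →ₗ[ZMod 2] (↥Sᶜ → ZMod 2) × (↥F → ZMod 2) :=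
  (LinearMap.funLeft _ _ Subtype.val).prod <| LinearMap.pi fun e : ↥F ↦
    Sym2.lift ⟨fun u v ↦ LinearMap.proj u + LinearMap.proj v, fun _ _ ↦ add_comm _ _⟩ e.1

theorem ker_monochromaticConstraints (S : Finset W) (F : Finset (Sym2 W)) :
    (LinearMap.ker (monochromaticConstraints S F) : Set (W → ZMod 2)) =
      monochromaticColorings S F := by
  ext c
  simp [monochromaticConstraints, monochromaticColorings, funext_iff, Sym2.forall,
    CharTwo.add_eq_zero]

theorem two_pow_card_le_card_monochromaticColorings (S : Finset W) (F : Finset (Sym2 W)) :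
    2 ^ #S ≤ Nat.card (monochromaticColorings S F) * 2 ^ #F := by
  have hK : Nat.card (monochromaticColorings S F) =
      2 ^ Module.finrank (ZMod 2) (LinearMap.ker (monochromaticConstraints S F)) := by
    rw [← ker_monochromaticConstraints, SetLike.coe_sort_coe,
      Module.natCard_eq_pow_finrank (K := ZMod 2), Nat.card_zmod]
  have hrank := (monochromaticConstraints S F).finrank_range_add_finrank_ker
  have hrange := Submodule.finrank_le (monochromaticConstraints S F).range
  simp only [Module.finrank_prod, Module.finrank_fintype_fun_eq_card, Fintype.card_coe,
    card_compl] at hrank hrange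
  rw [hK, ← pow_add]
  exact Nat.pow_le_pow_right two_pos (by have := card_le_univ S; omega)

end Monochromatic

section Weights
variable {V : Type*} [DecidableEq V]

noncomputable def insideWeight (e : Sym2 V) (S : Finset V) : ℝ :=
  if e ∈ S.sym2 then 1 / 2 else 1

theorem antitone_insideWeight (e : Sym2 V) : Antitone (insideWeight e) := fun S T hST ↦ by
  unfold insideWeight
  split_ifs with hT <;> norm_num
  exact hT (sym2_mono hST ‹_›)

theorem prod_insideWeight (E : Finset (Sym2 V)) (S : Finset V) :
    ∏ e ∈ E, insideWeight e S = (1 / 2) ^ #(E ∩ S.sym2) := by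
  simp only [insideWeight, prod_ite, prod_const, one_pow, mul_one, filter_mem_eq_inter]

variable [Fintype V]

theorem sum_pow_card_of_subset {R : Type*} [CommSemiring R] (a : R) (T : Finset V) :
    ∑ S : Finset V, (if T ⊆ S then a ^ #S else 0) = a ^ #T * (a + 1) ^ (Fintype.card V - #T) := by
  have h := prod_add (fun _ ↦ a) (fun i ↦ if i ∉ T then (1 : R) else 0) univ
  have hsub : ∀ S : Finset V, (∀ i ∈ univ \ S, i ∉ T) ↔ T ⊆ S := fun S ↦ by
    simp [subset_iff, not_imp_comm]
  have hfactor : ∀ i, (a + if i ∉ T then 1 else 0) = if i ∈ T then a else a + 1 := fun i ↦ by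
    split_ifs <;> simp_all
  simp only [prod_boole, prod_const, powerset_univ, hsub, mul_ite, mul_one, mul_zero, hfactor] at h
  rw [← h, prod_ite, filter_mem_eq_inter, univ_inter, prod_const, prod_const,
    filter_notMem_eq_sdiff, card_univ_sdiff]

theorem sum_two_pow_card :
    ∑ S : Finset V, (2 : ℝ) ^ #S = 3 ^ Fintype.card V := by
  simpa [two_add_one_eq_three] using sum_pow_card_of_subset (2 : ℝ) (∅ : Finset V)

theorem sum_two_pow_card_mul_insideWeight {e : Sym2 V} (he : ¬e.IsDiag) :
    ∑ S : Finset V, 2 ^ #S * insideWeight e S = 7 / 9 * 3 ^ Fintype.card V := by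
  induction e using Sym2.ind with | _ u v =>
  have huv : u ≠ v := by simpa using he
  have hn : 2 ≤ Fintype.card V := by
    simpa [card_pair huv] using card_le_univ {u, v}
  have hterm : ∀ S : Finset V, 2 ^ #S * insideWeight s(u, v) S =
      2 ^ #S - 1 / 2 * if {u, v} ⊆ S then 2 ^ #S else 0 := fun S ↦ by
    simp only [insideWeight, mk_mem_sym2_iff, insert_subset_iff, singleton_subset_iff]
    split_ifs <;> ring
  rw [sum_congr rfl fun S _ ↦ hterm S, sum_sub_distrib, ← mul_sum, sum_two_pow_card,
    sum_pow_card_of_subset, card_pair huv, ← Nat.sub_add_cancel hn, pow_add]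
  norm_num
  ring

theorem three_pow_mul_le_sum_two_pow_card_mul (E : Finset (Sym2 V)) (hE : ∀ e ∈ E, ¬e.IsDiag) :
    3 ^ Fintype.card V * (7 / 9) ^ #E ≤ ∑ S : Finset V, 2 ^ #S * (1 / 2 : ℝ) ^ #(E ∩ S.sym2) := by
  have hμ : ∀ S T : Finset V, (2 : ℝ) ^ #S * 2 ^ #T ≤ 2 ^ #(S ∩ T) * 2 ^ #(S ∪ T) := fun S T ↦ by
    rw [← pow_add, ← pow_add, card_inter_add_card_union]
  have hfkg := fkg_prod_of_antitone (μ := fun S : Finset V ↦ (2 : ℝ) ^ #S)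
    (fun S ↦ by positivity) hμ E (fun e _ S ↦ by unfold insideWeight; split_ifs <;> norm_num)
    fun e _ ↦ antitone_insideWeight e
  simp only [sum_two_pow_card, prod_insideWeight] at hfkg
  rw [prod_congr rfl fun e he ↦ sum_two_pow_card_mul_insideWeight (hE e he), prod_const,
    mul_pow] at hfkg
  exact le_of_mul_le_mul_left (by linarith) (by positivity : (0 : ℝ) < (3 ^ Fintype.card V) ^ #E)

end Weights

section WidomRowlinson
variable {V : Type*} [DecidableEq V]

def wrColoring (S : Finset V) (c : V → ZMod 2) : V → Fin 3 :=
  fun v ↦ if v ∈ S then if c v = 0 then 0 else 2 else 1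

theorem wrColoring_inj {S T : Finset V} {c d : V → ZMod 2} (hc : ∀ v ∉ S, c v = 0)
    (hd : ∀ v ∉ T, d v = 0) (h : wrColoring S c = wrColoring T d) : S = T ∧ c = d := by
  have hv := congr_fun h
  simp only [wrColoring] at hv
  obtain rfl : S = T := by
    ext v
    specialize hv v
    split_ifs at hv <;> simp_all
  refine ⟨rfl, funext fun v ↦ ?_⟩
  specialize hv v
  by_cases hvS : v ∈ S
  · revert hv
    simp only [hvS, if_true]
    generalize c v = x; generalize d v = y
    decide +revert
  · rw [hc v hvS, hd v hvS]

theorem wrColoring_isWR (H : SimpleGraph V) [Fintype H.edgeSet] {S : Finset V} {c : V → ZMod 2}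
    (hc : c ∈ monochromaticColorings S (H.edgeFinset ∩ S.sym2)) (a b : V) (hab : H.Adj a b) :
    ¬(wrColoring S c a = 0 ∧ wrColoring S c b = 2) := by
  have := hc.2 a b
  simp only [wrColoring, mem_inter, mem_edgeFinset, mem_edgeSet, mk_mem_sym2_iff] at this ⊢
  split_ifs <;> simp_all

variable [Fintype V]

theorem sum_card_monochromaticColorings_le_wrCount (H : SimpleGraph V) [Fintype H.edgeSet] :
    ∑ S : Finset V, Nat.card (monochromaticColorings S (H.edgeFinset ∩ S.sym2)) ≤ wrCount H := by
  rw [← Nat.card_sigma]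
  refine Nat.card_le_card_of_injective (fun p ↦ ⟨wrColoring p.1 p.2, wrColoring_isWR H p.2.2⟩) ?_
  rintro ⟨S, c, hc⟩ ⟨T, d, hd⟩ h
  obtain ⟨rfl, rfl⟩ := wrColoring_inj hc.1 hd.1 (congrArg Subtype.val h)
  rfl

theorem weighted_sum_le_wrCount (H : SimpleGraph V) [Fintype H.edgeSet] :
    ∑ S : Finset V, 2 ^ #S * (1 / 2 : ℝ) ^ #(H.edgeFinset ∩ S.sym2) ≤ wrCount H := by
  calc ∑ S : Finset V, 2 ^ #S * (1 / 2 : ℝ) ^ #(H.edgeFinset ∩ S.sym2)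
      ≤ ∑ S : Finset V, (Nat.card (monochromaticColorings S (H.edgeFinset ∩ S.sym2)) : ℝ) := by
        refine sum_le_sum fun S _ ↦ ?_
        rw [one_div, inv_pow, ← div_eq_mul_inv, div_le_iff₀ (by positivity)]
        exact_mod_cast two_pow_card_le_card_monochromaticColorings S _
    _ ≤ wrCount H := by exact_mod_cast sum_card_monochromaticColorings_le_wrCount H

end WidomRowlinson

theorem stmt_16 {V : Type*} [Fintype V] (H : SimpleGraph V) :
    (wrCount H : ℝ) ≥ 3 ^ (Fintype.card V) * (7 / 9) ^ (Nat.card H.edgeSet) := by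
  classical
  rw [Nat.card_eq_fintype_card, ← edgeFinset_card]
  exact (three_pow_mul_le_sum_two_pow_card_mul H.edgeFinset fun e he ↦
    H.not_isDiag_of_mem_edgeSet (mem_edgeFinset.mp he)).trans (weighted_sum_le_wrCount H)
end

section
/- Let H be a graph and e = (u,v) an edge of H. Then among Widom-Rowlinson configurations of H - e, the number with both u and v colored red is at least the number with u colored red and v colored blue: wr(H-e | u,v ∈ A) ≥ wr(H-e | u ∈ A, v ∈ C). -/
/-!
Let `c` be a Widom-Rowlinson configuration with `u` red and `v` blue, and recolor red the
component of `v` in the subgraph spanned by the non-white vertices. That component is entirely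
blue (a red vertex cannot be adjacent to a blue one), so `u` keeps its color, no red-blue edge is
created, and the white vertices are untouched. The latter makes the map injective: the component
can be read off the image, and on it the original color was blue.
-/

open SimpleGraph

namespace SimpleGraph

variable {V : Type*} (G : SimpleGraph V)

/-- Colors are `0` (red), `1` (white) and `2` (blue), as in `wrCount`. -/
def IsWRConfig (c : V → Fin 3) : Prop :=
  ∀ a b, G.Adj a b → ¬(c a = 0 ∧ c b = 2)

def nonWhite (c : V → Fin 3) : SimpleGraph V where
  Adj a b := G.Adj a b ∧ c a ≠ 1 ∧ c b ≠ 1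
  symm := ⟨fun _ _ h => ⟨h.1.symm, h.2.2, h.2.1⟩⟩
  loopless := ⟨fun a h => G.loopless.irrefl a h.1⟩

variable {G}

lemma nonWhite_congr {c c' : V → Fin 3} (h : ∀ a, c a = 1 ↔ c' a = 1) :
    G.nonWhite c = G.nonWhite c' := by
  ext a b
  simp only [nonWhite, ne_eq, h]

lemma IsWRConfig.eq_two_of_reachable {c : V → Fin 3} (hc : G.IsWRConfig c) {v a : V}
    (hv : c v = 2) (hva : (G.nonWhite c).Reachable v a) : c a = 2 := by
  obtain ⟨w⟩ := hva
  induction w with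
  | nil => exact hv
  | @cons x b y hxb _ ih =>
    obtain ⟨hadj, -, hb⟩ := hxb
    have hb_red : c b ≠ 0 := fun h0 => hc b x hadj.symm ⟨h0, hv⟩
    exact ih (by omega)

variable (G)

open Classical in
noncomputable def recolorComponent (c : V → Fin 3) (v : V) : V → Fin 3 :=
  fun a => if (G.nonWhite c).Reachable v a then 0 else c a

variable {G}

lemma recolorComponent_self (c : V → Fin 3) (v : V) : G.recolorComponent c v v = 0 :=
  if_pos (Reachable.refl v)

lemma recolorComponent_of_not_reachable {c : V → Fin 3} {v a : V}
    (h : ¬(G.nonWhite c).Reachable v a) : G.recolorComponent c v a = c a :=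
  if_neg h

lemma IsWRConfig.recolorComponent_apply_of_ne_two {c : V → Fin 3} (hc : G.IsWRConfig c) {v a : V}
    (hv : c v = 2) (ha : c a ≠ 2) : G.recolorComponent c v a = c a :=
  recolorComponent_of_not_reachable fun h => ha (hc.eq_two_of_reachable hv h)

lemma IsWRConfig.recolorComponent_eq_one_iff {c : V → Fin 3} (hc : G.IsWRConfig c) {v : V}
    (hv : c v = 2) (a : V) : G.recolorComponent c v a = 1 ↔ c a = 1 := by
  by_cases ha : c a = 2
  · simp only [recolorComponent, ha]
    split_ifs <;> decide
  · rw [hc.recolorComponent_apply_of_ne_two hv ha]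

lemma IsWRConfig.isWRConfig_recolorComponent {c : V → Fin 3} (hc : G.IsWRConfig c) {v : V}
    (hv : c v = 2) :
    G.IsWRConfig (G.recolorComponent c v) := by
  rintro a b hab ⟨ha, hb⟩
  have hvb : ¬(G.nonWhite c).Reachable v b := fun h => by
    simp [recolorComponent, h] at hb
  rw [recolorComponent_of_not_reachable hvb] at hb
  by_cases hva : (G.nonWhite c).Reachable v a
  · have ha_blue := hc.eq_two_of_reachable hv hva
    exact hvb (hva.trans (Adj.reachable ⟨hab, by omega, by omega⟩))
  · rw [recolorComponent_of_not_reachable hva] at ha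
    exact hc a b hab ⟨ha, hb⟩

lemma recolorComponent_injOn (v : V) :
    Set.InjOn (G.recolorComponent · v) {c | G.IsWRConfig c ∧ c v = 2} := by
  rintro c₁ ⟨hc₁, hv₁⟩ c₂ ⟨hc₂, hv₂⟩ heq
  have hwhite (a : V) : c₁ a = 1 ↔ c₂ a = 1 := by
    rw [← hc₁.recolorComponent_eq_one_iff hv₁, ← hc₂.recolorComponent_eq_one_iff hv₂]
    exact Eq.to_iff (congrArg (· = 1) (congrFun heq a))
  have hgraph := nonWhite_congr (G := G) hwhite
  funext a
  by_cases hva : (G.nonWhite c₁).Reachable v a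
  · rw [hc₁.eq_two_of_reachable hv₁ hva, hc₂.eq_two_of_reachable hv₂ (hgraph ▸ hva)]
  · calc c₁ a = G.recolorComponent c₁ v a := (recolorComponent_of_not_reachable hva).symm
      _ = G.recolorComponent c₂ v a := congrFun heq a
      _ = c₂ a := recolorComponent_of_not_reachable (hgraph ▸ hva)

theorem card_wrConfig_red_blue_le_red_red [Finite V] (u v : V) :
    Nat.card {c : V → Fin 3 // G.IsWRConfig c ∧ c u = 0 ∧ c v = 2} ≤
      Nat.card {c : V → Fin 3 // G.IsWRConfig c ∧ c u = 0 ∧ c v = 0} := by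
  refine Nat.card_le_card_of_injective
    (fun ⟨c, hc, hu, hv⟩ => ⟨G.recolorComponent c v, hc.isWRConfig_recolorComponent hv,
      (hc.recolorComponent_apply_of_ne_two hv (by simp [hu])).trans hu,
      recolorComponent_self c v⟩) ?_
  intro ⟨c₁, hc₁, _, hv₁⟩ ⟨c₂, hc₂, _, hv₂⟩ heq
  exact Subtype.ext (recolorComponent_injOn v ⟨hc₁, hv₁⟩ ⟨hc₂, hv₂⟩ (congrArg Subtype.val heq))

end SimpleGraph

theorem stmt_17_general {V : Type*} [Fintype V] (H : SimpleGraph V) (u v : V) :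
    Nat.card {c : V → Fin 3 //
        (∀ a b, (H.deleteEdges {s(u, v)}).Adj a b → ¬(c a = 0 ∧ c b = 2)) ∧
        c u = 0 ∧ c v = 0} ≥
      Nat.card {c : V → Fin 3 //
        (∀ a b, (H.deleteEdges {s(u, v)}).Adj a b → ¬(c a = 0 ∧ c b = 2)) ∧
        c u = 0 ∧ c v = 2} :=
  (H.deleteEdges {s(u, v)}).card_wrConfig_red_blue_le_red_red u v

theorem stmt_17 {V : Type*} [Fintype V] (H : SimpleGraph V) (u v : V) (he : H.Adj u v) :
    Nat.card {c : V → Fin 3 //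
        (∀ a b, (H.deleteEdges {s(u, v)}).Adj a b → ¬(c a = 0 ∧ c b = 2)) ∧
        c u = 0 ∧ c v = 0} ≥
      Nat.card {c : V → Fin 3 //
        (∀ a b, (H.deleteEdges {s(u, v)}).Adj a b → ¬(c a = 0 ∧ c b = 2)) ∧
        c u = 0 ∧ c v = 2} :=
  stmt_17_general H u v
end

section
/- Let T be a tree on n vertices. Then wr(T) = hom(T, P_3°) ≥ 2√2 · (1+√2)^{n-1}. -/
/-!
White vertices constrain nothing, so the Widom–Rowlinson colourings of `G` that are white
outside a vertex set `s` are exactly those of the induced subgraph `G[s]`. A nonempty forest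
has a vertex `v` with at most one neighbour. If `v` is isolated, deleting it divides the count
by three. If `v` is a leaf at `u`, a white `v` leaves the rest free, while a red or blue `v`
is possible in two ways when `u` is white and in one way otherwise, so
`wr(F) = 2 wr(F - v) + wr(F - v - u)`. Hence a forest on `n` vertices has at least
`H (n + 1)` colourings, where `H = 1, 1, 3, 7, 17, …` are the half companion Pell numbers
(the counts for paths), and `H (n + 1) ≥ 2 √2 (1 + √2) ^ (n - 1)` by the same recurrence,
since `(1 + √2) ^ 2 = 2 (1 + √2) + 1`.
-/

open SimpleGraph

open Finset

def halfCompanionPell : ℕ → ℕ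
  | 0 => 1
  | 1 => 1
  | n + 2 => 2 * halfCompanionPell (n + 1) + halfCompanionPell n

theorem halfCompanionPell_le_succ : ∀ n, halfCompanionPell n ≤ halfCompanionPell (n + 1)
  | 0 => le_rfl
  | n + 1 => by rw [halfCompanionPell]; omega

theorem halfCompanionPell_succ_le_three_mul :
    ∀ n, halfCompanionPell (n + 1) ≤ 3 * halfCompanionPell n
  | 0 => by decide
  | n + 1 => by rw [halfCompanionPell]; linarith [halfCompanionPell_le_succ n]

theorem two_mul_sqrt_two_mul_pow_le_halfCompanionPell :
    ∀ m, 2 * √2 * (1 + √2) ^ m ≤ halfCompanionPell (m + 2)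
  | 0 => by norm_num [halfCompanionPell]; nlinarith [Real.sq_sqrt zero_le_two]
  | 1 => by norm_num [halfCompanionPell]; nlinarith [Real.sq_sqrt zero_le_two]
  | m + 2 => by
    have hsq : (1 + √2) ^ 2 = 2 * (1 + √2) + 1 := by
      ring_nf; rw [Real.sq_sqrt zero_le_two]; ring
    have h₁ := two_mul_sqrt_two_mul_pow_le_halfCompanionPell (m + 1)
    have h₀ := two_mul_sqrt_two_mul_pow_le_halfCompanionPell m
    calc 2 * √2 * (1 + √2) ^ (m + 2)
        = 2 * (2 * √2 * (1 + √2) ^ (m + 1)) + 2 * √2 * (1 + √2) ^ m := by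
          rw [pow_add, hsq]; ring
      _ ≤ halfCompanionPell (m + 2 + 2) := by
          rw [halfCompanionPell]; push_cast; linarith

/-- Adjacency in the looped path `P₃°`: the colours allowed at the two ends of an edge. -/
def WRCompatible (i j : Fin 3) : Prop := ¬(i = 0 ∧ j = 2) ∧ ¬(j = 0 ∧ i = 2)

instance : DecidableRel WRCompatible := fun _ _ => inferInstanceAs (Decidable (¬_ ∧ ¬_))

theorem wrCompatible_one_right : ∀ i, WRCompatible i 1 := by decide

namespace SimpleGraph

variable {V : Type*}

theorem IsAcyclic.exists_neighborSet_subsingleton {G : SimpleGraph V} [Finite V] [Nonempty V]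
    (hG : G.IsAcyclic) : ∃ v, (G.neighborSet v).Subsingleton := by
  obtain ⟨u, v, p, hp, hmax⟩ := Walk.exists_isPath_forall_isPath_length_le_length G
  have hsnd : ∀ w, G.Adj u w → w = p.snd := fun w hadj =>
    hG.eq_snd_of_adj_start hp hadj <| by_contra fun hw => by
      simpa using hmax _ _ _ (hp.cons (h := hadj.symm) hw)
  exact ⟨u, fun w hw w' hw' => (hsnd w hw).trans (hsnd w' hw').symm⟩

theorem IsAcyclic.exists_mem_neighborSet_inter_subsingleton {G : SimpleGraph V}
    (hG : G.IsAcyclic) {s : Set V} (hs : s.Finite) (hne : s.Nonempty) :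
    ∃ v ∈ s, (G.neighborSet v ∩ s).Subsingleton := by
  have : Finite s := hs
  have : Nonempty s := hne.to_subtype
  obtain ⟨v, hv⟩ := (hG.induce s).exists_neighborSet_subsingleton
  refine ⟨v, v.2, fun w ⟨hw, hws⟩ w' ⟨hw', hws'⟩ => ?_⟩
  simpa using @hv ⟨w, hws⟩ hw ⟨w', hws'⟩ hw'

def IsWRColoring (G : SimpleGraph V) (c : V → Fin 3) : Prop :=
  ∀ a b, G.Adj a b → ¬(c a = 0 ∧ c b = 2)

variable {G : SimpleGraph V} [DecidableEq V]

theorem isWRColoring_update_iff {c : V → Fin 3} {v : V} (hc : c v = 1) (i : Fin 3) :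
    G.IsWRColoring (Function.update c v i) ↔
      G.IsWRColoring c ∧ ∀ w, G.Adj v w → WRCompatible i (c w) := by
  simp only [IsWRColoring, WRCompatible, Function.update_apply]
  refine ⟨fun h => ⟨fun a b hab => ?_, fun w hw => ?_⟩, fun ⟨h, hv⟩ a b hab => ?_⟩
  · grind [h a b hab]
  · grind [h v w hw, h w v hw.symm, hw.ne]
  · grind [hab.ne, hab.symm]

section Counting

variable [Fintype V]

open scoped Classical

noncomputable def wrColoringsOn (G : SimpleGraph V) (s : Finset V) : Finset (V → Fin 3) :=
  {c | G.IsWRColoring c ∧ ∀ v ∉ s, c v = 1}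

theorem mem_wrColoringsOn {s : Finset V} {c : V → Fin 3} :
    c ∈ G.wrColoringsOn s ↔ G.IsWRColoring c ∧ ∀ v ∉ s, c v = 1 := by
  simp [wrColoringsOn]

theorem wrColoringsOn_empty : G.wrColoringsOn ∅ = {fun _ => 1} := by
  ext c
  simp only [mem_wrColoringsOn, notMem_empty, not_false_eq_true, forall_const,
    mem_singleton, funext_iff]
  exact ⟨And.right, fun h => ⟨fun a b _ => by simp [h], h⟩⟩

theorem card_wrColoringsOn_univ : #(G.wrColoringsOn univ) = wrCount G := by
  rw [wrCount, Nat.card_eq_fintype_card, Fintype.card_subtype]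
  congr 1
  ext c
  simp [mem_wrColoringsOn, IsWRColoring]

theorem filter_wrColoringsOn_eq_one (s : Finset V) (u : V) :
    {c ∈ G.wrColoringsOn s | c u = 1} = G.wrColoringsOn (s.erase u) := by
  ext c
  simp only [mem_filter, mem_wrColoringsOn, mem_erase]
  grind

theorem card_wrColoringsOn_eq_sum {s : Finset V} {v : V} (hv : v ∈ s) :
    #(G.wrColoringsOn s) =
      ∑ i, #{c ∈ G.wrColoringsOn (s.erase v) | ∀ w, G.Adj v w → WRCompatible i (c w)} := by
  rw [card_eq_sum_card_fiberwise (f := fun c => c v) (t := univ) fun _ _ => mem_univ _]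
  refine sum_congr rfl fun i _ => card_nbij' (Function.update · v 1) (Function.update · v i)
    ?_ ?_ ?_ ?_ <;>
    simp only [Set.MapsTo, Set.LeftInvOn, Set.RightInvOn, mem_coe, mem_filter, mem_wrColoringsOn]
  · rintro c ⟨⟨hwr, hout⟩, rfl⟩
    have key := isWRColoring_update_iff (G := G) (Function.update_self v 1 c) (c v)
    rw [Function.update_idem, Function.update_eq_self] at key
    refine ⟨⟨(key.mp hwr).1, fun w hw => ?_⟩, (key.mp hwr).2⟩
    rcases eq_or_ne w v with rfl | hwv
    · simp
    · simp [hwv, hout w (by simpa [hwv] using hw)]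
  · rintro c ⟨⟨hwr, hout⟩, hcompat⟩
    have hcv : c v = 1 := hout v (notMem_erase v s)
    refine ⟨⟨(isWRColoring_update_iff hcv i).mpr ⟨hwr, hcompat⟩, fun w hw => ?_⟩, by simp⟩
    have hwv : w ≠ v := ne_of_mem_of_not_mem hv hw |>.symm
    simp [hwv, hout w (by simp [hw])]
  · rintro c ⟨-, rfl⟩
    simp
  · rintro c ⟨⟨-, hout⟩, -⟩
    simp [← hout v (notMem_erase v s)]

theorem card_wrColoringsOn_of_forall_not_adj {s : Finset V} {v : V} (hv : v ∈ s)
    (hiso : ∀ w ∈ s, ¬G.Adj v w) :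
    #(G.wrColoringsOn s) = 3 * #(G.wrColoringsOn (s.erase v)) := by
  have hfilter (i : Fin 3) :
      {c ∈ G.wrColoringsOn (s.erase v) | ∀ w, G.Adj v w → WRCompatible i (c w)} =
        G.wrColoringsOn (s.erase v) :=
    filter_true_of_mem fun c hc w hw => by
      rw [(mem_wrColoringsOn.mp hc).2 w fun hw' => hiso w (mem_of_mem_erase hw') hw]
      exact wrCompatible_one_right i
  simp [card_wrColoringsOn_eq_sum hv, hfilter]

theorem card_wrColoringsOn_of_forall_adj_eq {s : Finset V} {u v : V} (hv : v ∈ s)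
    (hvu : G.Adj v u) (hleaf : ∀ w ∈ s, G.Adj v w → w = u) :
    #(G.wrColoringsOn s) =
      2 * #(G.wrColoringsOn (s.erase v)) + #(G.wrColoringsOn ((s.erase v).erase u)) := by
  have hfilter (i : Fin 3) :
      {c ∈ G.wrColoringsOn (s.erase v) | ∀ w, G.Adj v w → WRCompatible i (c w)} =
        {c ∈ G.wrColoringsOn (s.erase v) | WRCompatible i (c u)} := by
    refine filter_congr fun c hc => ⟨fun h => h u hvu, fun h w hw => ?_⟩
    by_cases hws : w ∈ s
    · rwa [hleaf w hws hw]
    · rw [(mem_wrColoringsOn.mp hc).2 w fun hw' => hws (mem_of_mem_erase hw')]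
      exact wrCompatible_one_right i
  have hcount (j : Fin 3) :
      ∑ i, (if WRCompatible i j then 1 else 0) = 2 + if j = 1 then 1 else 0 := by
    revert j; decide
  rw [card_wrColoringsOn_eq_sum hv, ← filter_wrColoringsOn_eq_one (s.erase v) u]
  simp only [hfilter, card_filter]
  rw [sum_comm]
  simp [hcount, sum_add_distrib, mul_comm]

theorem IsAcyclic.halfCompanionPell_le_card_wrColoringsOn (hG : G.IsAcyclic) (s : Finset V) :
    halfCompanionPell (#s + 1) ≤ #(G.wrColoringsOn s) := by
  induction s using Finset.strongInduction with
  | H s ih =>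
  obtain rfl | hne := s.eq_empty_or_nonempty
  · simp [wrColoringsOn_empty, halfCompanionPell]
  obtain ⟨v, hv, hsub⟩ :=
    hG.exists_mem_neighborSet_inter_subsingleton s.finite_toSet (coe_nonempty.mpr hne)
  have ih₁ := ih _ (erase_ssubset hv)
  by_cases hleaf : ∃ u ∈ s, G.Adj v u
  · obtain ⟨u, hu, hvu⟩ := hleaf
    have hu' : u ∈ s.erase v := mem_erase.mpr ⟨hvu.ne', hu⟩
    have ih₂ := ih _ ((erase_ssubset hu').trans (erase_ssubset hv))
    rw [← card_erase_add_one hu'] at ih₁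
    rw [card_wrColoringsOn_of_forall_adj_eq hv hvu fun w hw hvw => hsub ⟨hvw, hw⟩ ⟨hvu, hu⟩,
      ← card_erase_add_one hv, ← card_erase_add_one hu', halfCompanionPell]
    omega
  · push Not at hleaf
    rw [card_wrColoringsOn_of_forall_not_adj hv hleaf, ← card_erase_add_one hv]
    linarith [halfCompanionPell_succ_le_three_mul (#(s.erase v) + 1)]

end Counting

end SimpleGraph

theorem stmt_18 {V : Type*} [Fintype V] (T : SimpleGraph V) (hT : T.IsTree) :
    (wrCount T : ℝ) ≥ 2 * Real.sqrt 2 * (1 + Real.sqrt 2) ^ (Fintype.card V - 1) := by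
  classical
  have : Nonempty V := hT.connected.nonempty
  have hcard : Fintype.card V - 1 + 2 = #(univ : Finset V) + 1 := by
    rw [card_univ]; have := Fintype.card_pos (α := V); omega
  calc 2 * √2 * (1 + √2) ^ (Fintype.card V - 1)
      ≤ halfCompanionPell (Fintype.card V - 1 + 2) :=
        two_mul_sqrt_two_mul_pow_le_halfCompanionPell _
    _ ≤ wrCount T := by
        rw [hcard, ← T.card_wrColoringsOn_univ]
        exact_mod_cast hT.isAcyclic.halfCompanionPell_le_card_wrColoringsOn univ
end
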